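/- Let R be a commutative ring and M an N × N matrix over R. The 2N × 2N skew-symmetric block matrix S = [[0, M], [-ᵗM, 0]] satisfies Pf(S) = (-1)^{N(N-1)/2} det M. -/

import Mathlib

/-!
Since `S` vanishes on its two diagonal blocks, only the perfect matchings that pair every index
of the first half with one of the second half contribute to `Pf(S)`. With the normalisation
`σ(2k) < σ(2k+1)` and `σ(0) < σ(2) < ⋯`, these are exactly the permutations
`2k ↦ k, 2k+1 ↦ N + π k` for `π ∈ S_N`, and such a permutation has sign `sign π` times the
sign of the unshuffle `2k ↦ k, 2k+1 ↦ N + k`. Hence `Pf(S) = sign(unshuffle) · det M`.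
The unshuffle on `2(N+1)` points is the one on `2N` points followed by an `(N+1)`-cycle,
so its sign is `(-1)^(N(N-1)/2)`.
-/

open Matrix

def evenIdx {m : ℕ} (k : Fin m) : Fin (2 * m) := ⟨2 * k.1, by have := k.isLt; omega⟩

def oddIdx {m : ℕ} (k : Fin m) : Fin (2 * m) := ⟨2 * k.1 + 1, by have := k.isLt; omega⟩

/-- The Pfaffian of a `2m × 2m` matrix, as a signed sum over perfect matchings of
`{1,…,2m}`, encoded as permutations `σ` with `σ(2k-1) < σ(2k)` and
`σ(1) < σ(3) < ⋯ < σ(2m-1)`. -/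
def pfaffian {R : Type*} [CommRing R] {m : ℕ}
    (A : Matrix (Fin (2 * m)) (Fin (2 * m)) R) : R :=
  ∑ σ : Equiv.Perm (Fin (2 * m)),
    if (∀ k : Fin m, σ (evenIdx k) < σ (oddIdx k)) ∧
        (∀ k l : Fin m, k < l → σ (evenIdx k) < σ (evenIdx l)) then
      (Equiv.Perm.sign σ : ℤ) • ∏ k : Fin m, A (σ (evenIdx k)) (σ (oddIdx k))
    else 0

open Equiv Equiv.Perm Sum

lemma Fin.val_extendDomain_castLEEmb {n m : ℕ} (h : n ≤ m) (σ : Perm (Fin n)) (i : Fin m) :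
    (σ.extendDomain (Fin.castLEEmb h).toEquivRange i : ℕ) =
      if hi : (i : ℕ) < n then (σ ⟨i, hi⟩ : ℕ) else i := by
  split_ifs with hi
  · have hmem : i ∈ Set.range (Fin.castLEEmb h) := ⟨⟨i, hi⟩, rfl⟩
    have hsymm : (Fin.castLEEmb h).toEquivRange.symm ⟨i, hmem⟩ = ⟨i, hi⟩ :=
      (Equiv.symm_apply_eq _).2 rfl
    rw [extendDomain_apply_subtype _ _ hmem, hsymm]
    rfl
  · rw [extendDomain_apply_not_subtype _ _ (by simpa using hi)]

lemma Fin.val_cycleIcc {n : ℕ} [NeZero n] (i j k : Fin n) :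
    (Fin.cycleIcc i j k : ℕ) =
      if k < i ∨ j < k then (k : ℕ) else if k = j then (i : ℕ) else (k : ℕ) + 1 := by
  rcases lt_or_ge k i with hki | hik
  · simp [Fin.cycleIcc_of_lt hki, hki]
  rcases lt_or_ge j k with hjk | hkj
  · simp [Fin.cycleIcc_of_gt hjk, hjk]
  have hmid : ¬(k < i ∨ j < k) := by simp [hik, hkj]
  rw [Fin.cycleIcc_of_le_of_le hik hkj, if_neg hmid]
  split_ifs with hk
  · rfl
  · have hkj' : (k : ℕ) < j := lt_of_le_of_ne hkj (Fin.val_ne_of_ne hk)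
    exact Fin.val_add_one_of_lt' (by omega)

lemma det_eq_sum_sign_smul_prod {n R : Type*} [DecidableEq n] [Fintype n] [CommRing R]
    (B : Matrix n n R) : B.det = ∑ π : Perm n, sign π • ∏ k, B k (π k) := by
  rw [← det_transpose, det_apply]
  rfl

noncomputable section

variable {N : ℕ}

@[simp] lemma val_evenIdx (k : Fin N) : (evenIdx k : ℕ) = 2 * k := rfl

@[simp] lemma val_oddIdx (k : Fin N) : (oddIdx k : ℕ) = 2 * k + 1 := rfl

def blockEquiv (N : ℕ) : Fin N ⊕ Fin N ≃ Fin (2 * N) :=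
  finSumFinEquiv.trans (finCongr (two_mul N).symm)

@[simp] lemma val_blockEquiv_inl (k : Fin N) : (blockEquiv N (inl k) : ℕ) = k := by
  simp [blockEquiv]

@[simp] lemma val_blockEquiv_inr (k : Fin N) : (blockEquiv N (inr k) : ℕ) = N + k := by
  simp [blockEquiv, add_comm]

lemma blockEquiv_inl_lt_blockEquiv_inr (a b : Fin N) :
    blockEquiv N (inl a) < blockEquiv N (inr b) := by
  rw [Fin.lt_def, val_blockEquiv_inl, val_blockEquiv_inr]
  omega

def interleaveEquiv (N : ℕ) : Fin N ⊕ Fin N ≃ Fin (2 * N) :=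
  Equiv.ofBijective (Sum.elim evenIdx oddIdx) <| by
    refine (Fintype.bijective_iff_injective_and_card _).2 ⟨?_, by simp [two_mul]⟩
    refine Function.Injective.sumElim (fun a b h => by simpa [Fin.ext_iff] using h)
      (fun a b h => by simpa [Fin.ext_iff] using h) fun a b h => ?_
    rw [Fin.ext_iff, val_evenIdx, val_oddIdx] at h
    omega

lemma interleaveEquiv_inl (k : Fin N) : interleaveEquiv N (inl k) = evenIdx k := rfl

lemma interleaveEquiv_inr (k : Fin N) : interleaveEquiv N (inr k) = oddIdx k := rfl

@[simp] lemma interleaveEquiv_symm_evenIdx (k : Fin N) :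
    (interleaveEquiv N).symm (evenIdx k) = inl k :=
  (interleaveEquiv N).symm_apply_eq.2 rfl

@[simp] lemma interleaveEquiv_symm_oddIdx (k : Fin N) :
    (interleaveEquiv N).symm (oddIdx k) = inr k :=
  (interleaveEquiv N).symm_apply_eq.2 rfl

def unshuffle (N : ℕ) : Perm (Fin (2 * N)) := (interleaveEquiv N).symm.trans (blockEquiv N)

@[simp] lemma unshuffle_evenIdx (k : Fin N) : unshuffle N (evenIdx k) = blockEquiv N (inl k) := by
  simp [unshuffle]

@[simp] lemma unshuffle_oddIdx (k : Fin N) : unshuffle N (oddIdx k) = blockEquiv N (inr k) := by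
  simp [unshuffle]

lemma val_unshuffle (i : Fin (2 * N)) :
    (unshuffle N i : ℕ) = if (i : ℕ) % 2 = 0 then (i : ℕ) / 2 else N + (i : ℕ) / 2 := by
  obtain ⟨k | k, rfl⟩ := (interleaveEquiv N).surjective i
  · rw [interleaveEquiv_inl, unshuffle_evenIdx, val_blockEquiv_inl, val_evenIdx]
    split_ifs <;> omega
  · rw [interleaveEquiv_inr, unshuffle_oddIdx, val_blockEquiv_inr, val_oddIdx]
    split_ifs <;> omega

lemma unshuffle_succ (N : ℕ) :
    unshuffle (N + 1) = Fin.cycleIcc ⟨N, by omega⟩ ⟨2 * N, by omega⟩ *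
      (unshuffle N).extendDomain
        (Fin.castLEEmb (by omega : 2 * N ≤ 2 * (N + 1))).toEquivRange := by
  ext i
  simp only [Perm.mul_apply, val_unshuffle, Fin.val_cycleIcc, Fin.val_extendDomain_castLEEmb,
    Fin.lt_def, Fin.ext_iff]
  have := i.isLt
  split_ifs <;> omega

lemma sign_unshuffle (N : ℕ) : sign (unshuffle N) = (-1) ^ (N * (N - 1) / 2) := by
  induction N with
  | zero =>
    have : unshuffle 0 = 1 := Equiv.ext fun i => absurd i.isLt (by omega)
    simp [this]
  | succ N ih =>
    rw [unshuffle_succ, Perm.sign_mul, Fin.sign_cycleIcc_of_le (Fin.mk_le_mk.2 (by omega)),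
      sign_extendDomain, ih, ← pow_add, Nat.triangle_succ]
    congr 1
    simp only
    omega

def pairing (π : Perm (Fin N)) : Perm (Fin (2 * N)) :=
  (blockEquiv N).permCongr (Perm.sumCongr 1 π) * unshuffle N

@[simp] lemma pairing_evenIdx (π : Perm (Fin N)) (k : Fin N) :
    pairing π (evenIdx k) = blockEquiv N (inl k) := by
  simp [pairing, permCongr_apply]

@[simp] lemma pairing_oddIdx (π : Perm (Fin N)) (k : Fin N) :
    pairing π (oddIdx k) = blockEquiv N (inr (π k)) := by
  simp [pairing, permCongr_apply]

lemma pairing_evenIdx_lt_pairing_oddIdx (π : Perm (Fin N)) (k : Fin N) :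
    pairing π (evenIdx k) < pairing π (oddIdx k) := by
  simpa using blockEquiv_inl_lt_blockEquiv_inr k (π k)

lemma strictMono_pairing_evenIdx (π : Perm (Fin N)) :
    StrictMono fun k => pairing π (evenIdx k) := fun k l hkl => by
  simpa only [pairing_evenIdx, Fin.lt_def, val_blockEquiv_inl] using hkl

lemma pairing_injective : Function.Injective (pairing (N := N)) := fun π π' h =>
  Equiv.ext fun k => by simpa using congrArg (· (oddIdx k)) h

lemma sign_pairing (π : Perm (Fin N)) : sign (pairing π) = sign π * sign (unshuffle N) := by
  simp [pairing, sign_permCongr, sign_sumCongr]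

lemma exists_pairing_eq {σ : Perm (Fin (2 * N))}
    (hmono : StrictMono fun k => σ (evenIdx k))
    (heven : ∀ k, ∃ a, σ (evenIdx k) = blockEquiv N (inl a))
    (hodd : ∀ k, ∃ b, σ (oddIdx k) = blockEquiv N (inr b)) : ∃ π, pairing π = σ := by
  choose f hf using heven
  choose g hg using hodd
  have hf_id : f = id := StrictMono.eq_id fun k l hkl => by
    simpa only [hf, Fin.lt_def, val_blockEquiv_inl] using hmono hkl
  have hg_inj : Function.Injective g := fun k l hkl => by
    have := σ.injective ((hg k).trans (hkl ▸ (hg l).symm))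
    simpa [Fin.ext_iff] using this
  refine ⟨Equiv.ofBijective g (Finite.injective_iff_bijective.1 hg_inj), Equiv.ext fun i => ?_⟩
  obtain ⟨k | k, rfl⟩ := (interleaveEquiv N).surjective i
  · simp [interleaveEquiv_inl, hf, hf_id]
  · simp [interleaveEquiv_inr, hg]

lemma reindex_fromBlocks_apply_eq_zero_or {R : Type*} [Zero R] (B C : Matrix (Fin N) (Fin N) R)
    {i j : Fin (2 * N)} (hij : i < j) :
    reindex (blockEquiv N) (blockEquiv N) (fromBlocks 0 B C 0) i j = 0 ∨
      (∃ a, i = blockEquiv N (inl a)) ∧ ∃ b, j = blockEquiv N (inr b) := by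
  obtain ⟨x | x, rfl⟩ := (blockEquiv N).surjective i <;>
    obtain ⟨y | y, rfl⟩ := (blockEquiv N).surjective j
  · simp
  · exact Or.inr ⟨⟨x, rfl⟩, y, rfl⟩
  · exact absurd hij (blockEquiv_inl_lt_blockEquiv_inr y x).asymm
  · simp

theorem pfaffian_reindex_fromBlocks_zero_zero {R : Type*} [CommRing R]
    (B C : Matrix (Fin N) (Fin N) R) :
    pfaffian (reindex (blockEquiv N) (blockEquiv N) (fromBlocks 0 B C 0)) =
      (-1) ^ (N * (N - 1) / 2) * B.det := by
  rw [pfaffian, det_eq_sum_sign_smul_prod, Finset.mul_sum]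
  refine (Fintype.sum_of_injective pairing pairing_injective _ _ (fun σ hσ => ?_)
    fun π => ?_).symm
  · refine ite_eq_right_iff.2 fun hmatch => ?_
    obtain ⟨k, hk⟩ : ∃ k, reindex (blockEquiv N) (blockEquiv N) (fromBlocks 0 B C 0)
        (σ (evenIdx k)) (σ (oddIdx k)) = 0 := by
      by_contra! hne
      have hcross k :=
        (reindex_fromBlocks_apply_eq_zero_or B C (hmatch.1 k)).resolve_left (hne k)
      exact hσ (exists_pairing_eq hmatch.2 (fun k => (hcross k).1) fun k => (hcross k).2)
    exact smul_eq_zero_of_right _ (Finset.prod_eq_zero (Finset.mem_univ k) hk)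
  · rw [if_pos ⟨pairing_evenIdx_lt_pairing_oddIdx π,
      fun _ _ h => strictMono_pairing_evenIdx π h⟩]
    simp only [pairing_evenIdx, pairing_oddIdx, reindex_apply, submatrix_apply, symm_apply_apply,
      fromBlocks_apply₁₂, sign_pairing, sign_unshuffle, Units.smul_def, zsmul_eq_mul]
    push_cast
    ring

end

theorem stmt2 (R : Type*) [CommRing R] (N : ℕ) (M : Matrix (Fin N) (Fin N) R) :
    pfaffian
      (Matrix.reindex (finSumFinEquiv.trans (finCongr (two_mul N).symm))
        (finSumFinEquiv.trans (finCongr (two_mul N).symm))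
        (Matrix.fromBlocks 0 M (-Mᵀ) 0)) =
      (-1 : R) ^ (N * (N - 1) / 2) * M.det :=
  pfaffian_reindex_fromBlocks_zero_zero M (-Mᵀ)
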